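/- For every n ≥ 1, ℓ ≥ 1, and ε ∈ (0,1), there exists an ε-biased ℓ-wise independent distribution S on {−1,1}ⁿ whose support has size 2^{O(log log n + ℓ + log(1/ε))}; in particular, it can be sampled with O(log log n + ℓ + log(1/ε)) random bits. -/

import Mathlib

/-!
Choose distinct `α₁, …, αₙ` in `K = 𝔽_{2^t}` with `t ≈ log n`. By Vandermonde, the vectors
`aᵢ = (αᵢ^u)_{u < ℓ} ∈ K^ℓ ≅ 𝔽₂^{ℓt}` are `ℓ`-wise linearly independent over `𝔽₂`, so every
nonempty `y` with `|y| ≤ ℓ` has `b = ∑_{i ∈ y} aᵢ ≠ 0`. It remains to fool the single parity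
`⟨b, ·⟩` on `𝔽₂^{ℓt}`, which the AGHP powering construction does: over `F = 𝔽_{2^m}` the seed
`(x, w)` yields the bits `⟨x^j, w⟩`, whose parity along `b` is `⟨∑_j b_j x^j, w⟩`. This is unbiased
over `w` unless `x` is one of the fewer than `ℓt` roots of `∑_j b_j X^j`, so the bias is below
`ℓt / 2^m`. With `2^m ≈ ℓt / ε` the sample space has `4^m = O((ℓ log n / ε)²)` points, and
`zᵢ = (-1)^⟨aᵢ, r⟩` satisfies `∏_{i ∈ y} zᵢ = (-1)^⟨b, r⟩`.
-/

open Finset Matrix Real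

def signChar : AddChar (ZMod 2) ℝ := AddChar.zmodChar 2 (ζ := (-1 : ℝ)) (by norm_num)

lemma signChar_one : signChar 1 = -1 := by
  simp [signChar, AddChar.zmodChar_apply, ZMod.val_one]

lemma signChar_eq_one_or_neg_one (a : ZMod 2) : signChar a = 1 ∨ signChar a = -1 := by
  fin_cases a
  · exact Or.inl (AddChar.map_zero_eq_one _)
  · exact Or.inr signChar_one

lemma AddChar.map_sum_eq_prod {A M ι : Type*} [AddCommMonoid A] [CommMonoid M]
    (ψ : AddChar A M) (s : Finset ι) (f : ι → A) : ψ (∑ i ∈ s, f i) = ∏ i ∈ s, ψ (f i) := by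
  classical
  induction s using Finset.induction_on with
  | empty => simp
  | insert i s hi ih => rw [sum_insert hi, prod_insert hi, AddChar.map_add_eq_mul, ih]

lemma sum_signChar_dotProduct {ι : Type*} [Fintype ι] [DecidableEq ι] (u : ι → ZMod 2) :
    ∑ w, signChar (u ⬝ᵥ w) = if u = 0 then (Fintype.card (ι → ZMod 2) : ℝ) else 0 := by
  split_ifs with hu
  · simp [hu]
  obtain ⟨c, hc⟩ := Function.ne_iff.mp hu
  let ψ := signChar.compAddMonoidHom (AddMonoidHom.mk' (u ⬝ᵥ ·) (dotProduct_add u))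
  refine AddChar.sum_eq_zero_of_ne_one (ψ := ψ) (AddChar.ne_one_iff.mpr ⟨Pi.single c 1, ?_⟩)
  have : u c = 1 := (by decide : ∀ a : ZMod 2, a ≠ 0 → a = 1) _ hc
  norm_num [ψ, dotProduct_single, this, signChar_one]

def IsEpsBiased {Ω J : Type*} [Fintype Ω] [Fintype J] (r : Ω → J → ZMod 2) (ε : ℝ) : Prop :=
  ∀ b : J → ZMod 2, b ≠ 0 → |(∑ s, signChar (b ⬝ᵥ r s)) / Fintype.card Ω| ≤ ε

theorem IsEpsBiased.abs_sum_prod_le {Ω J ι : Type*} [Fintype Ω] [Fintype J]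
    {r : Ω → J → ZMod 2} {ε : ℝ} (hr : IsEpsBiased r ε) {a : ι → J → ZMod 2} {y : Finset ι}
    (hy : y.Nonempty) (ha : LinearIndepOn (ZMod 2) a (y : Set ι)) :
    |(∑ s, ∏ i ∈ y, signChar (a i ⬝ᵥ r s)) / Fintype.card Ω| ≤ ε := by
  have hsum : ∑ i ∈ y, a i ≠ 0 := fun h => by
    obtain ⟨i, hi⟩ := hy
    simpa using linearIndepOn_iff'.mp ha y (fun _ => 1) subset_rfl (by simpa using h) i hi
  simpa only [← signChar.map_sum_eq_prod, ← sum_dotProduct] using hr _ hsum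

theorem IsEpsBiased.comp_equiv {Ω Ω' J : Type*} [Fintype Ω] [Fintype Ω'] [Fintype J]
    {r : Ω → J → ZMod 2} {ε : ℝ} (hr : IsEpsBiased r ε) (e : Ω' ≃ Ω) : IsEpsBiased (r ∘ e) ε := by
  intro b hb
  rw [Fintype.card_congr e]
  simpa only [Function.comp_apply, e.sum_comp (fun s => signChar (b ⬝ᵥ r s))] using hr b hb

theorem linearIndepOn_powers {K ι : Type*} [Field K] {α : ι → K} {s : Finset ι}
    (hα : Set.InjOn α s) {ℓ : ℕ} (hs : #s ≤ ℓ) :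
    LinearIndepOn K (fun i (u : Fin ℓ) => α i ^ (u : ℕ)) (s : Set ι) := by
  rw [LinearIndepOn, Fintype.linearIndependent_iff]
  intro g hg
  let e : (s : Set ι) ≃ Fin #s := s.equivFin
  have hinj : Function.Injective fun j => α (e.symm j) := fun j j' h =>
    e.symm.injective (Subtype.ext (hα (e.symm j).2 (e.symm j').2 h))
  have hpow : ∀ u : Fin #s, ∑ j, (g ∘ e.symm) j * α (e.symm j) ^ (u : ℕ) = 0 := fun u => by
    have := congrFun hg (Fin.castLE hs u)
    simp only [Finset.sum_apply, Pi.smul_apply, smul_eq_mul, Pi.zero_apply, Fin.val_castLE] at this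
    rw [← this]
    exact e.symm.sum_comp (fun i => g i * α i ^ (u : ℕ))
  intro i
  simpa using congrFun (Matrix.eq_zero_of_forall_pow_sum_mul_pow_eq_zero hinj hpow) (e i)

theorem card_filter_sum_mul_pow_eq_zero_lt {F : Type*} [Field F] [Fintype F] [DecidableEq F]
    {k : ℕ} {c : Fin k → F} (hc : c ≠ 0) : #{x | ∑ j, c j * x ^ (j : ℕ) = 0} < k := by
  by_contra! h
  set S := ({x | ∑ j, c j * x ^ (j : ℕ) = 0} : Finset F)
  let f : Fin k → F := fun j => S.equivFin.symm (Fin.castLE h j)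
  have hf : Function.Injective f := fun j j' hjj' =>
    Fin.castLE_injective h (S.equivFin.symm.injective (Subtype.ext hjj'))
  exact hc (Matrix.eq_zero_of_forall_index_sum_mul_pow_eq_zero hf fun j =>
    (mem_filter.mp (S.equivFin.symm (Fin.castLE h j)).2).2)

section Powering

variable {F ι : Type*} [Field F] [Algebra (ZMod 2) F] [Fintype ι]

def poweringString (bin : F →ₗ[ZMod 2] (ι → ZMod 2)) (k : ℕ) (x : F) (w : ι → ZMod 2) :
    Fin k → ZMod 2 :=
  fun j => bin (x ^ (j : ℕ)) ⬝ᵥ w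

lemma dotProduct_poweringString (bin : F →ₗ[ZMod 2] (ι → ZMod 2)) {k : ℕ} (b : Fin k → ZMod 2)
    (x : F) (w : ι → ZMod 2) :
    b ⬝ᵥ poweringString bin k x w = bin (∑ j, b j • x ^ (j : ℕ)) ⬝ᵥ w := by
  simp only [map_sum, map_smul, sum_dotProduct, smul_dotProduct, smul_eq_mul]
  rfl

theorem isEpsBiased_poweringString [Fintype F] [DecidableEq ι]
    (bin : F →ₗ[ZMod 2] (ι → ZMod 2)) (hbin : Function.Injective bin) (k : ℕ) :
    IsEpsBiased (fun s : F × (ι → ZMod 2) => poweringString bin k s.1 s.2)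
      (k / Fintype.card F) := by
  classical
  intro b hb
  have hsum : ∑ s : F × (ι → ZMod 2), signChar (b ⬝ᵥ poweringString bin k s.1 s.2) =
      #{x | ∑ j, algebraMap (ZMod 2) F (b j) * x ^ (j : ℕ) = 0} *
        (Fintype.card (ι → ZMod 2) : ℝ) := by
    simp only [Fintype.sum_prod_type, dotProduct_poweringString, sum_signChar_dotProduct,
      map_eq_zero_iff bin hbin, Algebra.smul_def]
    rw [sum_ite, sum_const_zero, add_zero, sum_const, nsmul_eq_mul]
  have hroots := card_filter_sum_mul_pow_eq_zero_lt (c := fun j => algebraMap (ZMod 2) F (b j))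
    fun h => hb (funext fun j => (algebraMap (ZMod 2) F).injective (by simpa using congrFun h j))
  rw [hsum, Fintype.card_prod, Nat.cast_mul, mul_div_mul_right _ _ (by positivity),
    abs_of_nonneg (by positivity)]
  gcongr

end Powering

theorem exists_linearIndepOn_zmod_two {n t : ℕ} (ℓ : ℕ) (ht : t ≠ 0) (hn : n ≤ 2 ^ t) :
    ∃ a : Fin n → Fin (ℓ * t) → ZMod 2,
      ∀ y : Finset (Fin n), #y ≤ ℓ → LinearIndepOn (ZMod 2) a (y : Set (Fin n)) := by
  let K := GaloisField 2 t
  let := Fintype.ofFinite K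
  obtain ⟨α⟩ : Nonempty (Fin n ↪ K) := Function.Embedding.nonempty_of_card_le <| by
    rwa [Fintype.card_fin, ← Nat.card_eq_fintype_card, GaloisField.card 2 t ht]
  have hrank : Module.finrank (ZMod 2) (Fin ℓ → K) = ℓ * t := by
    rw [Module.finrank_pi_fintype, sum_const, card_univ, Fintype.card_fin, smul_eq_mul,
      GaloisField.finrank 2 ht]
  let bin := (Module.finBasisOfFinrankEq (ZMod 2) (Fin ℓ → K) hrank).equivFun
  refine ⟨fun i => bin fun u => α i ^ (u : ℕ), fun y hy => ?_⟩
  exact ((linearIndepOn_powers α.injective.injOn hy).restrict_scalars' (ZMod 2)).map'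
    bin.toLinearMap bin.ker

theorem exists_isEpsBiased (k : ℕ) {m : ℕ} (hm : m ≠ 0) :
    ∃ r : Fin (2 ^ m * 2 ^ m) → Fin k → ZMod 2, IsEpsBiased r (k / 2 ^ m) := by
  let F := GaloisField 2 m
  let := Fintype.ofFinite F
  have hF : Fintype.card F = 2 ^ m := by
    rw [← Nat.card_eq_fintype_card, GaloisField.card 2 m hm]
  let bin := (Module.finBasisOfFinrankEq (ZMod 2) F (GaloisField.finrank 2 hm)).equivFun
  have hcard : Fintype.card (F × (Fin m → ZMod 2)) = 2 ^ m * 2 ^ m := by simp [hF]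
  have hr := isEpsBiased_poweringString bin.toLinearMap bin.injective k
  rw [hF, Nat.cast_pow, Nat.cast_two] at hr
  exact ⟨_, hr.comp_equiv (Fintype.equivFinOfCardEq hcard).symm⟩

theorem neg_log_two_le_log_log (n : ℕ) : -log 2 ≤ log (log n) := by
  rcases Nat.lt_or_ge n 2 with hn | hn
  · interval_cases n <;> simp [(log_pos one_lt_two).le]
  · have h2 : 1 / 2 ≤ log n := by
      have := log_two_gt_d9
      have := log_le_log two_pos (by exact_mod_cast hn : (2 : ℝ) ≤ n)
      linarith
    calc -log 2 = log (1 / 2) := by rw [one_div, log_inv]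
      _ ≤ log (log n) := log_le_log (by norm_num) h2

theorem log_le_log_four_add_log_log {n t : ℕ} (ht : 2 ^ t ≤ 2 * n) :
    log t ≤ log 4 + log (log n) := by
  have hL := neg_log_two_le_log_log n
  have h4 : log 4 = 2 * log 2 := by
    rw [show (4 : ℝ) = 2 ^ 2 by norm_num, log_pow, Nat.cast_two]
  have hlog2 := log_two_gt_d9
  rcases Nat.eq_zero_or_pos t with rfl | ht1
  · simp only [Nat.cast_zero, log_zero]
    linarith
  rcases Nat.lt_or_ge n 2 with hn | hn2
  · obtain rfl : t = 1 :=
      le_antisymm ((Nat.pow_le_pow_iff_right one_lt_two).mp (by omega)) ht1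
    obtain rfl : n = 1 := by omega
    simp only [Nat.cast_one, log_one, log_zero, add_zero]
    linarith
  have hlogn : log 2 ≤ log n := log_le_log two_pos (by exact_mod_cast hn2)
  have htn : (t : ℝ) ≤ 4 * log n := by
    have := log_le_log (by positivity) (by exact_mod_cast ht : (2 : ℝ) ^ t ≤ 2 * n)
    rw [log_pow, log_mul two_ne_zero (by positivity)] at this
    nlinarith
  calc log t ≤ log (4 * log n) := log_le_log (by positivity) htn
    _ = log 4 + log (log n) := log_mul (by norm_num) (by linarith)

theorem two_pow_mul_two_pow_le {n ℓ t m : ℕ} {ε : ℝ} (hε0 : 0 < ε) (hε1 : ε < 1)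
    (ht : 2 ^ t ≤ 2 * n) (hm : 2 ^ m ≤ 2 * (ℓ * t * ⌈1 / ε⌉₊)) :
    ((2 ^ m * 2 ^ m : ℕ) : ℝ) ≤ 2 ^ (32 * (log (log n) + ℓ + log (1 / ε))) := by
  have hL := neg_log_two_le_log_log n
  have hE : 0 < log (1 / ε) := log_pos (by rw [lt_div_iff₀ hε0]; linarith)
  have hlog2 := log_two_gt_d9
  have hlog2' := log_two_lt_d9
  obtain ⟨hℓ0, ht0⟩ : ℓ ≠ 0 ∧ t ≠ 0 := by
    have := Nat.one_le_two_pow.trans hm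
    constructor <;> rintro rfl <;> simp at this
  have hℓ : (1 : ℝ) ≤ ℓ := by exact_mod_cast Nat.one_le_iff_ne_zero.mpr hℓ0
  have hc0 : 0 < ⌈1 / ε⌉₊ := Nat.ceil_pos.mpr (by positivity)
  have hceil : log ⌈1 / ε⌉₊ ≤ log 2 + log (1 / ε) := by
    rw [← log_mul two_ne_zero (by positivity)]
    exact log_le_log (by positivity) (Nat.ceil_le_two_mul (by rw [le_div_iff₀ hε0]; linarith))
  have hmlog : m * log 2 ≤ log 2 + log ℓ + log t + log ⌈1 / ε⌉₊ := by
    have := log_le_log (by positivity)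
      (by exact_mod_cast hm : (2 : ℝ) ^ m ≤ 2 * (ℓ * t * ⌈1 / ε⌉₊ : ℕ))
    rw [log_pow, Nat.cast_mul, Nat.cast_mul, log_mul, log_mul, log_mul] at this <;> first
      | positivity | linarith
  have hlogℓ := log_le_sub_one_of_pos (by positivity : (0 : ℝ) < ℓ)
  have hlogt := log_le_log_four_add_log_log ht
  have h4 : log 4 = 2 * log 2 := by
    rw [show (4 : ℝ) = 2 ^ 2 by norm_num, log_pow, Nat.cast_two]
  have hexp : (2 * m : ℝ) ≤ 32 * (log (log n) + ℓ + log (1 / ε)) := by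
    nlinarith
  calc ((2 ^ m * 2 ^ m : ℕ) : ℝ) = 2 ^ ((2 * m : ℕ) : ℝ) := by
        rw [rpow_natCast, two_mul, pow_add]; push_cast; ring
    _ ≤ _ := rpow_le_rpow_of_exponent_le one_le_two (by exact_mod_cast hexp)

theorem div_le_of_mul_ceil_one_div_le {k : ℕ} {D ε : ℝ} (hε : 0 < ε) (hD : 0 < D)
    (h : (k : ℝ) * ⌈1 / ε⌉₊ ≤ D) : k / D ≤ ε := by
  have : (k : ℝ) * (1 / ε) ≤ D :=
    (mul_le_mul_of_nonneg_left (Nat.le_ceil _) k.cast_nonneg).trans h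
  rwa [mul_one_div, div_le_iff₀ hε, mul_comm, ← div_le_iff₀ hD] at this

theorem exists_lt_two_pow_le_two_mul {N : ℕ} (hN : N ≠ 0) :
    ∃ t ≠ 0, N < 2 ^ t ∧ 2 ^ t ≤ 2 * N := by
  refine ⟨Nat.log 2 N + 1, Nat.succ_ne_zero _, Nat.lt_pow_succ_log_self one_lt_two N, ?_⟩
  rw [pow_succ']
  exact Nat.mul_le_mul_left 2 (Nat.pow_log_le_self 2 hN)

/-- Existence of small-support `ε`-biased `ℓ`-wise independent distributions (AGHP/NN):
for every `n ≥ 1`, `ℓ ≥ 1`, `ε ∈ (0,1)` there is a distribution on `{−1,1}ⁿ` (given as the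
uniform distribution over a sequence of `M` strings) of support size
`M ≤ 2^{O(log log n + ℓ + log(1/ε))}` that is `ε`-biased `ℓ`-wise independent. -/
theorem stmt14 : ∃ C : ℝ, 0 < C ∧ ∀ (n ℓ : ℕ), 1 ≤ n → 1 ≤ ℓ →
    ∀ ε : ℝ, 0 < ε → ε < 1 →
    ∃ (M : ℕ) (z : Fin M → Fin n → ℝ), 0 < M ∧
      (M : ℝ) ≤ 2 ^ (C * (Real.log (Real.log n) + ℓ + Real.log (1 / ε))) ∧
      (∀ s i, z s i = 1 ∨ z s i = -1) ∧
      ∀ y : Finset (Fin n), y.Nonempty → y.card ≤ ℓ →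
        |(∑ s, ∏ i ∈ y, z s i) / M| ≤ ε := by
  refine ⟨32, by norm_num, fun n ℓ hn hℓ ε hε0 hε1 => ?_⟩
  obtain ⟨t, ht0, hnt, htn⟩ := exists_lt_two_pow_le_two_mul (N := n) (by omega)
  obtain ⟨m, hm0, hNm, hmN⟩ :=
    exists_lt_two_pow_le_two_mul (N := ℓ * t * ⌈1 / ε⌉₊) (by positivity)
  obtain ⟨a, ha⟩ := exists_linearIndepOn_zmod_two ℓ ht0 hnt.le
  obtain ⟨r, hr⟩ := exists_isEpsBiased (ℓ * t) hm0
  refine ⟨2 ^ m * 2 ^ m, fun s i => signChar (a i ⬝ᵥ r s), by positivity,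
    two_pow_mul_two_pow_le hε0 hε1 htn hmN, fun s i => signChar_eq_one_or_neg_one _,
    fun y hy hyℓ => ?_⟩
  have hbias := hr.abs_sum_prod_le hy (ha y hyℓ)
  rw [Fintype.card_fin] at hbias
  exact hbias.trans (div_le_of_mul_ceil_one_div_le hε0 (by positivity) (by exact_mod_cast hNm.le))
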